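/- arXiv:1012.5912 — 2 statements merged into one kernel-verified Lean document; each statement's English description precedes it below -/
import Mathlib

section
/- The trilinear form φ₀(u,v,w) := ⟨u × v, w⟩ on the imaginary octonions is totally antisymmetric (alternating): it changes sign under swapping any two of its arguments. -/
noncomputable section

/-- The octonions as Cayley–Dickson pairs of quaternions. -/
abbrev Octonion := Quaternion ℝ × Quaternion ℝ

/-- Cayley–Dickson multiplication. -/
def omul (x y : Octonion) : Octonion :=
  (x.1 * y.1 - star y.2 * x.2, y.2 * x.1 + x.2 * star y.1)

/-- Octonion conjugation. -/
def oconj (x : Octonion) : Octonion := (star x.1, -x.2)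

/-- Real part, identified with a real number. -/
def oRe (x : Octonion) : ℝ := x.1.re

/-- Imaginary part `(x - conj x)/2`. -/
def oIm (x : Octonion) : Octonion := (2 : ℝ)⁻¹ • (x - oconj x)

/-- The inner product `⟨x,y⟩ = Re (x · conj y)`. -/
def oInner (x y : Octonion) : ℝ := oRe (omul x (oconj y))

/-- The cross product `u × v = Im (conj v · u)` of imaginary octonions. -/
def ocross (u v : Octonion) : Octonion := oIm (omul (oconj v) u)

/-- The associator `[x,y,z] = ((x·y)·z - x·(y·z))/2`. -/
def oAssoc (x y z : Octonion) : Octonion :=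
  (2 : ℝ)⁻¹ • (omul (omul x y) z - omul x (omul y z))

/-! For imaginary `u, v, w` one has `φ₀(u,v,w) = Re((v u) w)`. The form `Re((x y) z)` is cyclic,
since `Re(a b) = Re(b a)` and the associator has zero real part (both reduce to the cyclicity of
the real part of quaternion products). For imaginary arguments it is also antisymmetric in `x, y`:
conjugation preserves the real part and reverses products. A cyclic form that is antisymmetric in
one pair of arguments is alternating. -/

namespace Quaternion

variable {R : Type*} [CommRing R]

theorem re_mul_comm (a b : Quaternion R) : (a * b).re = (b * a).re := by
  simp only [re_mul]; ring

theorem re_mul_mul_comm (a b c : Quaternion R) : (a * b * c).re = (c * a * b).re := by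
  rw [re_mul_comm, mul_assoc]

theorem re_star_mul_comm (a b : Quaternion R) : (star a * b).re = (star b * a).re := by
  rw [← re_star, star_mul, star_star]

end Quaternion

theorem oRe_oconj (x : Octonion) : oRe (oconj x) = oRe x := Quaternion.re_star x.1

theorem oRe_neg (x : Octonion) : oRe (-x) = -oRe x := Quaternion.re_neg x.1

theorem omul_neg (x y : Octonion) : omul x (-y) = -omul x y := by
  simp only [omul, Prod.fst_neg, Prod.snd_neg, star_neg, mul_neg, neg_mul, Prod.neg_mk]
  congr 1 <;> abel

theorem neg_omul (x y : Octonion) : omul (-x) y = -omul x y := by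
  simp only [omul, Prod.fst_neg, Prod.snd_neg, mul_neg, neg_mul, Prod.neg_mk]
  congr 1 <;> abel

theorem oconj_omul (x y : Octonion) : oconj (omul x y) = omul (oconj y) (oconj x) := by
  simp only [oconj, omul, star_sub, star_mul, star_star, star_neg, mul_neg, neg_mul,
    neg_neg]
  congr 1; abel

theorem oRe_omul_comm (x y : Octonion) : oRe (omul x y) = oRe (omul y x) := by
  simp only [oRe, omul, Quaternion.re_sub]
  rw [Quaternion.re_mul_comm x.1, Quaternion.re_star_mul_comm]

theorem oRe_omul_assoc (x y z : Octonion) :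
    oRe (omul (omul x y) z) = oRe (omul x (omul y z)) := by
  simp only [oRe, omul, star_add, star_mul, star_star, mul_sub, sub_mul, mul_add, add_mul,
    Quaternion.re_sub, Quaternion.re_add, ← mul_assoc]
  rw [Quaternion.re_mul_mul_comm (star y.2) x.2 z.1, Quaternion.re_mul_mul_comm (star z.2) y.2 x.1,
    Quaternion.re_mul_mul_comm (star z.2) x.2 (star y.1)]
  abel

theorem oInner_eq_neg_oRe_omul {w : Octonion} (x : Octonion) (hw : oconj w = -w) :
    oInner x w = -oRe (omul x w) := by
  rw [oInner, hw, omul_neg, oRe_neg]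

-- `oIm x` differs from `x` by the real scalar `oRe x`, which meets `w` only through `w.1.re = 0`.
theorem oRe_omul_oIm {w : Octonion} (x : Octonion) (hw : oconj w = -w) :
    oRe (omul (oIm x) w) = oRe (omul x w) := by
  have hw1 : w.1.re = 0 := by
    have := congrArg (fun q => q.1.re) hw
    simp only [oconj, Quaternion.re_star, Prod.fst_neg, Quaternion.re_neg] at this
    linarith
  simp only [oRe, oIm, omul, oconj, Prod.smul_fst, Prod.smul_snd, Prod.fst_sub, Prod.snd_sub,
    Quaternion.re_sub, Quaternion.re_mul, Quaternion.re_smul, Quaternion.imI_smul,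
    Quaternion.imJ_smul, Quaternion.imK_smul, Quaternion.re_star, Quaternion.imI_sub,
    Quaternion.imJ_sub, Quaternion.imK_sub, Quaternion.imI_star, Quaternion.imJ_star,
    Quaternion.imK_star, Quaternion.re_neg, Quaternion.imI_neg, Quaternion.imJ_neg,
    Quaternion.imK_neg, smul_eq_mul, hw1]
  ring

theorem oInner_ocross {v w : Octonion} (u : Octonion) (hv : oconj v = -v) (hw : oconj w = -w) :
    oInner (ocross u v) w = oRe (omul (omul v u) w) := by
  rw [ocross, oInner_eq_neg_oRe_omul _ hw, oRe_omul_oIm _ hw, hv, neg_omul, neg_omul, oRe_neg,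
    neg_neg]

theorem oRe_omul_omul_cyclic (x y z : Octonion) :
    oRe (omul (omul x y) z) = oRe (omul (omul z x) y) := by
  rw [oRe_omul_comm, oRe_omul_assoc]

theorem oRe_omul_omul_swap {x y z : Octonion}
    (hx : oconj x = -x) (hy : oconj y = -y) (hz : oconj z = -z) :
    oRe (omul (omul x y) z) = -oRe (omul (omul y x) z) := by
  rw [← oRe_oconj, oconj_omul, oconj_omul, hx, hy, hz]
  simp only [neg_omul, omul_neg, neg_neg, oRe_neg]
  rw [oRe_omul_comm]

theorem phi0_alternating (u v w : Octonion)
    (hu : oconj u = -u) (hv : oconj v = -v) (hw : oconj w = -w) :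
    oInner (ocross v u) w = -oInner (ocross u v) w ∧
    oInner (ocross u w) v = -oInner (ocross u v) w ∧
    oInner (ocross w v) u = -oInner (ocross u v) w := by
  have hφ : oInner (ocross u v) w = -oRe (omul (omul u v) w) := by
    rw [oInner_ocross u hv hw, oRe_omul_omul_swap hv hu hw]
  refine ⟨?_, ?_, ?_⟩
  · rw [oInner_ocross v hu hw, hφ, neg_neg]
  · rw [oInner_ocross u hw hv, ← oRe_omul_omul_cyclic, hφ, neg_neg]
  · rw [oInner_ocross w hv hu, oRe_omul_omul_cyclic, hφ, neg_neg]
end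
end

section
/- The octonions are a normed algebra: for all octonions x, y, |x·y| = |x|·|y|, where |x|² = Re(x·conj x). -/
noncomputable section

/-- The norm `|x| = √(Re (x · conj x))`. -/
noncomputable def onorm (x : Octonion) : ℝ := Real.sqrt (oRe (omul x (oconj x)))

open Quaternion

theorem Quaternion.re_mul_comm_s15 {R : Type*} [CommRing R] (x y : ℍ[R]) :
    (x * y).re = (y * x).re := by
  simp only [re_mul]
  ring

/-- After expanding with `normSq_add` and multiplicativity of `normSq`, the cross terms
`Re (a c b̄ d)` and `Re (d a c b̄)` cancel because `Re (x y) = Re (y x)`. -/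
theorem Quaternion.normSq_cayleyDickson_mul {R : Type*} [CommRing R] (a b c d : ℍ[R]) :
    normSq (a * c - star d * b) + normSq (d * a + b * star c) =
      (normSq a + normSq b) * (normSq c + normSq d) := by
  rw [sub_eq_add_neg, normSq_add, normSq_add, normSq_neg, map_mul, map_mul, map_mul, map_mul,
    normSq_star, normSq_star, star_neg, star_mul, star_star, star_mul, star_star]
  simp only [mul_neg, re_neg, ← mul_assoc, re_mul_comm_s15 (a * c * star b) d]
  ring

theorem oRe_omul_oconj_self (z : Octonion) :
    oRe (omul z (oconj z)) = normSq z.1 + normSq z.2 := by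
  simp [omul, oconj, oRe, normSq_def]

theorem octonion_normed (x y : Octonion) : onorm (omul x y) = onorm x * onorm y := by
  rw [onorm, onorm, onorm, oRe_omul_oconj_self, oRe_omul_oconj_self, oRe_omul_oconj_self,
    ← Real.sqrt_mul (add_nonneg normSq_nonneg normSq_nonneg), ← normSq_cayleyDickson_mul]
  rfl
end
end
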